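/- Let d be a prime, n ≥ 1, D := d^n, let G be a finite additive group, and let T : G → (D×D unitary complex matrices) satisfy T(0) = 1 and: for all a, b ∈ G there exists c ∈ ℂ with |c| = 1 and T(a) · (T(b))† = c · T(a − b). Fix any error element m ∈ (ZMod d)^n × (ZMod d)^n and let Ω(m) := (W(m) ⊗ 1) Ω₀. Then the family of unit vectors { ((T(a))† ⊗ 1) Ω(m) : a ∈ G } is pairwise orthogonal if and only if Tr(T(a)) = 0 for all a ≠ 0 in G. -/

import Mathlib

/-!
The state `Ω₀` is the row-major vectorisation of `D^{-1/2} • 1`, and `X ⊗ 1` acts on vectorised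
matrices by left multiplication. Hence the inner product of `(A† ⊗ 1)(W ⊗ 1)Ω₀` and
`(B† ⊗ 1)(W ⊗ 1)Ω₀` is `Tr((A†W)†(B†W)) / D = Tr(A B†) / D` for unitary `W`, and `W(m)`, a Kronecker
product of phase-twisted shifts, is unitary. Since `T(a) T(b)†` is a unimodular multiple of
`T(a - b)`, the vectors for `a ≠ b` are orthogonal exactly when `Tr T(a - b) = 0`.
-/

open Matrix Complex Kronecker

noncomputable section

/-- ω = exp(2πi/d). -/
def omga (d : ℕ) : ℂ := Complex.exp (2 * Real.pi * Complex.I / d)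

/-- The Weyl operator W_{k,l}: (j,j') entry is ω^{jk} if j' = j + l, else 0. -/
def weyl (d : ℕ) (k l : ZMod d) : Matrix (ZMod d) (ZMod d) ℂ :=
  Matrix.of fun j j' => if j' = j + l then omga d ^ (j * k).val else 0

/-- n-fold Kronecker product W(k⃗,l⃗), indexed by Fin n → ZMod d. -/
def weylN (d n : ℕ) (e : (Fin n → ZMod d) × (Fin n → ZMod d)) :
    Matrix (Fin n → ZMod d) (Fin n → ZMod d) ℂ :=
  Matrix.of fun j j' => ∏ i, weyl d (e.1 i) (e.2 i) (j i) (j' i)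

/-- The maximally entangled unit vector Ω₀ = D^{−1/2} Σ_i e_i ⊗ e_i, D = d^n. -/
def maxEnt (d n : ℕ) : ((Fin n → ZMod d) × (Fin n → ZMod d)) → ℂ :=
  fun q => if q.1 = q.2 then (((Real.sqrt (d ^ n))⁻¹ : ℝ) : ℂ) else 0

namespace Matrix

variable {κ l m n p R : Type*} [CommRing R]

section PiKronecker

variable [Fintype κ]

def piKronecker (M : κ → Matrix l m R) : Matrix (κ → l) (κ → m) R :=
  of fun j j' => ∏ i, M i (j i) (j' i)

theorem piKronecker_mul [DecidableEq κ] [Fintype m] (M : κ → Matrix l m R)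
    (N : κ → Matrix m p R) :
    piKronecker M * piKronecker N = piKronecker fun i => M i * N i := by
  ext j j'
  simp only [piKronecker, mul_apply, of_apply, Finset.prod_univ_sum, Fintype.piFinset_univ,
    Finset.prod_mul_distrib]

theorem piKronecker_one [DecidableEq l] : piKronecker (fun _ : κ => (1 : Matrix l l R)) = 1 := by
  ext j j'
  simp only [piKronecker, of_apply, one_apply, Finset.prod_boole, Finset.mem_univ, true_implies,
    funext_iff]

theorem conjTranspose_piKronecker [StarRing R] (M : κ → Matrix l m R) :
    (piKronecker M)ᴴ = piKronecker fun i => (M i)ᴴ := by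
  ext j j'
  simp [piKronecker, star_prod]

theorem piKronecker_mem_unitaryGroup [DecidableEq κ] [Fintype l] [DecidableEq l] [StarRing R]
    (M : κ → Matrix l l R) (hM : ∀ i, M i ∈ unitaryGroup l R) :
    piKronecker M ∈ unitaryGroup (κ → l) R := by
  simp only [mem_unitaryGroup_iff', star_eq_conjTranspose] at hM ⊢
  simp [conjTranspose_piKronecker, piKronecker_mul, hM, piKronecker_one]

end PiKronecker

/- Mathlib's `vec` stacks columns; `vec Xᵀ` is the row-major vectorisation `(p, q) ↦ X p q`,
the one matching the indexing of `A ⊗ₖ 1`. -/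
section RowVec

variable [Fintype m] [Fintype n]

theorem kronecker_one_mulVec_vec_transpose [DecidableEq n] (A : Matrix l m R)
    (X : Matrix m n R) : (A ⊗ₖ (1 : Matrix n n R)) *ᵥ vec Xᵀ = vec (A * X)ᵀ := by
  rw [kronecker_mulVec_vec, Matrix.one_mul, transpose_mul]

theorem star_vec_transpose_dotProduct_vec_transpose [StarRing R] (X Y : Matrix m n R) :
    star (vec Xᵀ) ⬝ᵥ vec Yᵀ = (Xᴴ * Y).trace := by
  rw [star_vec_dotProduct_vec, conjTranspose_transpose_eq_transpose_conjTranspose,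
    ← transpose_mul, trace_transpose, trace_mul_comm]

end RowVec

end Matrix

lemma norm_omga (d : ℕ) : ‖omga d‖ = 1 := by
  rw [omga, show 2 * Real.pi * I / d = ((2 * Real.pi / d : ℝ) : ℂ) * I by push_cast; ring,
    norm_exp_ofReal_mul_I]

lemma weyl_mem_unitaryGroup (d : ℕ) [NeZero d] (k l : ZMod d) :
    weyl d k l ∈ unitaryGroup (ZMod d) ℂ := by
  rw [mem_unitaryGroup_iff']
  ext j j'
  rw [star_eq_conjTranspose, mul_apply, Finset.sum_eq_single (j - l)]
  · obtain rfl | h := eq_or_ne j' j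
    · simp [weyl, ← map_pow, conj_mul', norm_omga]
    · simp [weyl, h, one_apply_ne' h]
  · intro r _ hr
    have : j ≠ r + l := fun h => hr (by rw [h, add_sub_cancel_right])
    simp [weyl, this]
  · simp

lemma weylN_mem_unitaryGroup {d n : ℕ} [NeZero d] (e : (Fin n → ZMod d) × (Fin n → ZMod d)) :
    weylN d n e ∈ unitaryGroup (Fin n → ZMod d) ℂ :=
  piKronecker_mem_unitaryGroup _ fun i => weyl_mem_unitaryGroup d (e.1 i) (e.2 i)

lemma maxEnt_eq_smul_vec_one (d n : ℕ) :
    maxEnt d n = (((Real.sqrt (d ^ n))⁻¹ : ℝ) : ℂ) • vec (1 : Matrix (Fin n → ZMod d) _ ℂ)ᵀ := by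
  ext ⟨p, q⟩
  simp [maxEnt, one_apply, eq_comm]

lemma star_kronecker_mulVec_maxEnt_dotProduct {d n : ℕ} [NeZero d]
    (A B W : Matrix (Fin n → ZMod d) (Fin n → ZMod d) ℂ)
    (hW : W ∈ unitaryGroup (Fin n → ZMod d) ℂ) :
    star ((Aᴴ ⊗ₖ (1 : Matrix (Fin n → ZMod d) (Fin n → ZMod d) ℂ)).mulVec
        ((W ⊗ₖ (1 : Matrix (Fin n → ZMod d) (Fin n → ZMod d) ℂ)).mulVec (maxEnt d n))) ⬝ᵥ
      ((Bᴴ ⊗ₖ (1 : Matrix (Fin n → ZMod d) (Fin n → ZMod d) ℂ)).mulVec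
        ((W ⊗ₖ (1 : Matrix (Fin n → ZMod d) (Fin n → ZMod d) ℂ)).mulVec (maxEnt d n))) =
      ((d : ℂ) ^ n)⁻¹ * (A * Bᴴ).trace := by
  have hnorm : star (((Real.sqrt (d ^ n))⁻¹ : ℝ) : ℂ) * (((Real.sqrt (d ^ n))⁻¹ : ℝ) : ℂ) =
      ((d : ℂ) ^ n)⁻¹ := by
    rw [star_def, conj_ofReal, ← ofReal_mul, ← mul_inv, Real.mul_self_sqrt (by positivity)]
    push_cast
    rfl
  have htrace : ((Aᴴ * W)ᴴ * (Bᴴ * W)).trace = (A * Bᴴ).trace := by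
    rw [conjTranspose_mul, conjTranspose_conjTranspose, Matrix.mul_assoc, trace_mul_comm]
    rw [mem_unitaryGroup_iff, star_eq_conjTranspose] at hW
    simp only [Matrix.mul_assoc, hW, Matrix.mul_one]
  simp only [maxEnt_eq_smul_vec_one, mulVec_smul, kronecker_one_mulVec_vec_transpose,
    Matrix.mul_one, star_smul, smul_dotProduct, dotProduct_smul,
    star_vec_transpose_dotProduct_vec_transpose, htrace, smul_eq_mul, ← hnorm]
  ring

theorem twisted_bell_orthogonal_iff_traceless_general
    (d n : ℕ) [NeZero d]
    (G : Type*) [AddGroup G]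
    (T : G → Matrix (Fin n → ZMod d) (Fin n → ZMod d) ℂ)
    (hTgrp : ∀ a b : G, ∃ c : ℂ, ‖c‖ = 1 ∧ T a * (T b)ᴴ = c • T (a - b))
    (m : (Fin n → ZMod d) × (Fin n → ZMod d)) :
    (∀ a b : G, a ≠ b →
      star (((T a)ᴴ ⊗ₖ (1 : Matrix (Fin n → ZMod d) (Fin n → ZMod d) ℂ)).mulVec
          ((weylN d n m ⊗ₖ (1 : Matrix (Fin n → ZMod d) (Fin n → ZMod d) ℂ)).mulVec
            (maxEnt d n))) ⬝ᵥ
        (((T b)ᴴ ⊗ₖ (1 : Matrix (Fin n → ZMod d) (Fin n → ZMod d) ℂ)).mulVec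
          ((weylN d n m ⊗ₖ (1 : Matrix (Fin n → ZMod d) (Fin n → ZMod d) ℂ)).mulVec
            (maxEnt d n))) = 0) ↔
    (∀ a : G, a ≠ 0 → (T a).trace = 0) := by
  have hD : ((d : ℂ) ^ n)⁻¹ ≠ 0 := by simp [NeZero.ne d]
  have htrace : ∀ a b, (T a * (T b)ᴴ).trace = 0 ↔ (T (a - b)).trace = 0 := fun a b => by
    obtain ⟨c, hc, hab⟩ := hTgrp a b
    rw [hab, trace_smul, smul_eq_zero, or_iff_right (norm_ne_zero_iff.mp (by rw [hc]; simp))]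
  simp only [star_kronecker_mulVec_maxEnt_dotProduct _ _ _ (weylN_mem_unitaryGroup m),
    mul_eq_zero, hD, false_or, htrace]
  constructor
  · intro h a ha
    simpa using h a 0 ha
  · intro h a b hab
    exact h _ (sub_ne_zero.mpr hab)

/-- for a family of unitaries T : G → U(D) with T(0) = 1 and
T(a)T(b)† = c·T(a−b) for unimodular phases c, the vectors (T(a)† ⊗ 1)Ω(m) are pairwise
orthogonal iff Tr(T(a)) = 0 for all a ≠ 0. -/
theorem twisted_bell_orthogonal_iff_traceless
    (d n : ℕ) [NeZero d] (hd : d.Prime) (hn : 1 ≤ n)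
    (G : Type*) [AddGroup G] [Fintype G]
    (T : G → Matrix (Fin n → ZMod d) (Fin n → ZMod d) ℂ)
    (hT0 : T 0 = 1)
    (hTU : ∀ a, T a ∈ Matrix.unitaryGroup (Fin n → ZMod d) ℂ)
    (hTgrp : ∀ a b : G, ∃ c : ℂ, ‖c‖ = 1 ∧ T a * (T b)ᴴ = c • T (a - b))
    (m : (Fin n → ZMod d) × (Fin n → ZMod d)) :
    (∀ a b : G, a ≠ b →
      star (((T a)ᴴ ⊗ₖ (1 : Matrix (Fin n → ZMod d) (Fin n → ZMod d) ℂ)).mulVec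
          ((weylN d n m ⊗ₖ (1 : Matrix (Fin n → ZMod d) (Fin n → ZMod d) ℂ)).mulVec
            (maxEnt d n))) ⬝ᵥ
        (((T b)ᴴ ⊗ₖ (1 : Matrix (Fin n → ZMod d) (Fin n → ZMod d) ℂ)).mulVec
          ((weylN d n m ⊗ₖ (1 : Matrix (Fin n → ZMod d) (Fin n → ZMod d) ℂ)).mulVec
            (maxEnt d n))) = 0) ↔
    (∀ a : G, a ≠ 0 → (T a).trace = 0) :=
  twisted_bell_orthogonal_iff_traceless_general d n G T hTgrp m

end
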